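/- arXiv:1005.0810 — 3 statements merged into one kernel-verified Lean document; each statement's English description precedes it below -/
import Mathlib

section
/- Let w be a nonnegative real random variable and let C > 0 and α ∈ (3,4) be such that lim_{x→∞} x^{α−1} P(w > x) = C. Then E[w²] < ∞ and lim_{σ→0⁺} σ^{3−α} (E[w²/(1+σw)] − E[w²]) = C(α−1)π/sin(πα). -/
/-!
Put `H(v) = v³/(1+v)`. Then `w²/(1+σw) - w² = -σ⁻² H(σw)`, and the layer cake formula turns
`E[H(σw)]` into `∫₀^∞ H'(y) P(w > y/σ) dy` with `H'(y) = y²(3+2y)/(1+y)²`. After multiplying by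
`σ^{3-α}` the integrand becomes `y^{3-α}(3+2y)/(1+y)² · φ(y/σ)` with `φ(x) = x^{α-1} P(w > x)`,
which is bounded on `(0, ∞)` and tends to `C`; dominated convergence gives the limit
`-C ∫₀^∞ y^{3-α}(3+2y)/(1+y)² dy`. Splitting `3 + 2y = 2(1+y) + 1` reduces that integral to two
Beta integrals, and the reflection formula evaluates it to `-(α-1)π/sin(πα)`. The same bound on
`φ` gives `E[w²] = ∫₀^∞ 2t P(w > t) dt < ∞`, because `α > 3`.
-/

open MeasureTheory Filter Real Set
open scoped Topology

theorem integral_Ioo_rpow_mul_one_sub_rpow {a b : ℝ} (ha : 0 < a) (hb : 0 < b) :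
    ∫ x in Ioo (0 : ℝ) 1, x ^ (a - 1) * (1 - x) ^ (b - 1) =
      Gamma a * Gamma b / Gamma (a + b) := by
  have hbeta : Complex.betaIntegral a b =
      ((∫ x in (0 : ℝ)..1, x ^ (a - 1) * (1 - x) ^ (b - 1) : ℝ) : ℂ) := by
    rw [Complex.betaIntegral, ← intervalIntegral.integral_ofReal]
    refine intervalIntegral.integral_congr fun x hx => ?_
    rw [uIcc_of_le zero_le_one] at hx
    push_cast [Complex.ofReal_cpow hx.1, Complex.ofReal_cpow (sub_nonneg.2 hx.2)]
    rfl
  rw [Complex.betaIntegral_eq_Gamma_mul_div _ _ (by simpa) (by simpa), ← Complex.ofReal_add,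
    Complex.Gamma_ofReal, Complex.Gamma_ofReal, Complex.Gamma_ofReal] at hbeta
  rw [← integral_Ioc_eq_integral_Ioo, ← intervalIntegral.integral_of_le zero_le_one]
  exact_mod_cast hbeta.symm

lemma image_div_one_add_Ioi : (fun y : ℝ => y / (1 + y)) '' Ioi 0 = Ioo 0 1 := by
  ext x
  constructor
  · rintro ⟨y, hy : 0 < y, rfl⟩
    exact ⟨by positivity, (div_lt_one (by positivity)).2 (by linarith)⟩
  · rintro ⟨hx0, hx1⟩
    refine ⟨x / (1 - x), div_pos hx0 (by linarith), ?_⟩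
    field_simp
    ring

theorem integral_Ioi_rpow_mul_one_add_rpow {a b : ℝ} (ha : 0 < a) (hb : 0 < b) :
    ∫ y in Ioi (0 : ℝ), y ^ (a - 1) * (1 + y) ^ (-(a + b)) =
      Gamma a * Gamma b / Gamma (a + b) := by
  have hderiv : ∀ y ∈ Ioi (0 : ℝ),
      HasDerivWithinAt (fun y => y / (1 + y)) ((1 + y) ^ 2)⁻¹ (Ioi 0) y := fun y (hy : 0 < y) =>
    (((hasDerivAt_id y).div ((hasDerivAt_id y).const_add 1) (by positivity)).congr_deriv
      (by simp)).hasDerivWithinAt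
  have hinj : InjOn (fun y : ℝ => y / (1 + y)) (Ioi 0) :=
    fun y (hy : 0 < y) z (hz : 0 < z) h => by
      field_simp at h
      linarith
  rw [← integral_Ioo_rpow_mul_one_sub_rpow ha hb, ← image_div_one_add_Ioi,
    integral_image_eq_integral_abs_deriv_smul measurableSet_Ioi hderiv hinj]
  refine setIntegral_congr_fun measurableSet_Ioi fun y (hy : 0 < y) => ?_
  have h1y : 0 < 1 + y := by linarith
  rw [smul_eq_mul, abs_of_pos (by positivity), show 1 - y / (1 + y) = (1 + y)⁻¹ by field_simp; ring,
    div_rpow hy.le h1y.le, inv_rpow h1y.le, show -(a + b) = -2 + -(a - 1) + -(b - 1) by ring,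
    rpow_add h1y, rpow_add h1y, rpow_neg h1y.le, rpow_neg h1y.le, rpow_neg h1y.le, rpow_two]
  ring

lemma integrableOn_Ioi_rpow_mul_one_add_rpow {a b : ℝ} (ha : 0 < a) (hb : 0 < b) :
    IntegrableOn (fun y : ℝ => y ^ (a - 1) * (1 + y) ^ (-(a + b))) (Ioi 0) :=
  .of_integral_ne_zero <| by
    rw [integral_Ioi_rpow_mul_one_add_rpow ha hb]
    exact (div_pos (mul_pos (Gamma_pos_of_pos ha) (Gamma_pos_of_pos hb))
      (Gamma_pos_of_pos (add_pos ha hb))).ne'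

lemma rpow_neg_mul_three_add_two_mul_div_one_add_sq {s y : ℝ} (hy : 0 < y) :
    y ^ (-s) * (3 + 2 * y) / (1 + y) ^ 2 =
      2 * (y ^ ((1 - s) - 1) * (1 + y) ^ (-((1 - s) + s)))
        + y ^ ((1 - s) - 1) * (1 + y) ^ (-((1 - s) + (1 + s))) := by
  have h1y : 0 < 1 + y := by linarith
  rw [show (1 - s) - 1 = -s by ring, show -((1 - s) + s) = -1 by ring,
    show -((1 - s) + (1 + s)) = -(2 : ℕ) by push_cast; ring, rpow_neg h1y.le, rpow_neg h1y.le,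
    rpow_one, rpow_natCast]
  field_simp
  ring

lemma integrableOn_Ioi_rpow_neg_mul_three_add_two_mul_div_one_add_sq {s : ℝ} (hs0 : 0 < s)
    (hs1 : s < 1) :
    IntegrableOn (fun y : ℝ => y ^ (-s) * (3 + 2 * y) / (1 + y) ^ 2) (Ioi 0) :=
  IntegrableOn.congr_fun
    (((integrableOn_Ioi_rpow_mul_one_add_rpow (sub_pos.2 hs1) hs0).const_mul 2).add
      (integrableOn_Ioi_rpow_mul_one_add_rpow (sub_pos.2 hs1) (by linarith : 0 < 1 + s)))
    (fun _ hy => (rpow_neg_mul_three_add_two_mul_div_one_add_sq hy).symm) measurableSet_Ioi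

theorem integral_Ioi_rpow_neg_mul_three_add_two_mul_div_one_add_sq {s : ℝ} (hs0 : 0 < s)
    (hs1 : s < 1) :
    ∫ y in Ioi (0 : ℝ), y ^ (-s) * (3 + 2 * y) / (1 + y) ^ 2 = (s + 2) * π / sin (π * s) := by
  rw [setIntegral_congr_fun measurableSet_Ioi
      fun _ hy => rpow_neg_mul_three_add_two_mul_div_one_add_sq hy,
    integral_add ((integrableOn_Ioi_rpow_mul_one_add_rpow (sub_pos.2 hs1) hs0).const_mul 2)
      (integrableOn_Ioi_rpow_mul_one_add_rpow (sub_pos.2 hs1) (by linarith : 0 < 1 + s)),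
    integral_const_mul, integral_Ioi_rpow_mul_one_add_rpow (sub_pos.2 hs1) hs0,
    integral_Ioi_rpow_mul_one_add_rpow (sub_pos.2 hs1) (by linarith : 0 < 1 + s),
    show 1 - s + s = 1 by ring, show 1 - s + (1 + s) = 1 + 1 by ring, add_comm 1 s,
    Gamma_add_one one_ne_zero, Gamma_add_one hs0.ne', Gamma_one, mul_div_assoc _ π,
    ← Gamma_mul_Gamma_one_sub]
  ring

theorem exists_forall_rpow_mul_le_of_tendsto {T : ℝ → ℝ} {p C M : ℝ} (hp : 0 ≤ p) (hM : 0 ≤ M)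
    (hTM : ∀ x, T x ≤ M) (hT : Tendsto (fun x => x ^ p * T x) atTop (𝓝 C)) :
    ∃ K, ∀ x > 0, x ^ p * T x ≤ K := by
  obtain ⟨x₀, hx₀⟩ := eventually_atTop.1 (hT.eventually (eventually_le_nhds (lt_add_one C)))
  refine ⟨max (C + 1) (max x₀ 0 ^ p * M), fun x hx => ?_⟩
  rcases le_total x₀ x with h | h
  · exact (hx₀ x h).trans (le_max_left _ _)
  · calc x ^ p * T x ≤ x ^ p * M := mul_le_mul_of_nonneg_left (hTM x) (by positivity)
      _ ≤ max x₀ 0 ^ p * M := by gcongr; exact le_max_of_le_left h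
      _ ≤ _ := le_max_right _ _

theorem tendsto_setIntegral_mul_comp_div {k φ : ℝ → ℝ} {K C : ℝ} (hk : IntegrableOn k (Ioi 0))
    (hφ : Measurable φ) (hφK : ∀ x > 0, |φ x| ≤ K) (hφC : Tendsto φ atTop (𝓝 C)) :
    Tendsto (fun σ => ∫ y in Ioi 0, k y * φ (y / σ)) (𝓝[>] 0)
      (𝓝 ((∫ y in Ioi 0, k y) * C)) := by
  rw [← integral_mul_const]
  refine tendsto_integral_filter_of_dominated_convergence (fun y => ‖k y‖ * K) ?_ ?_
    (hk.norm.mul_const K) ?_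
  · exact Eventually.of_forall fun σ =>
      hk.aestronglyMeasurable.mul (hφ.comp (measurable_id.div_const σ)).aestronglyMeasurable
  · filter_upwards [self_mem_nhdsWithin] with σ (hσ : 0 < σ)
    filter_upwards [ae_restrict_mem measurableSet_Ioi] with y (hy : 0 < y)
    rw [norm_mul]
    exact mul_le_mul_of_nonneg_left (hφK _ (div_pos hy hσ)) (norm_nonneg _)
  · filter_upwards [ae_restrict_mem measurableSet_Ioi] with y (hy : 0 < y)
    refine (hφC.comp ?_).const_mul (k y)
    simpa only [← div_eq_mul_inv] using tendsto_inv_nhdsGT_zero.const_mul_atTop hy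

section

variable {Ω : Type*} [MeasurableSpace Ω] {μ : Measure Ω} [IsFiniteMeasure μ]

lemma antitone_measureReal_lt (f : Ω → ℝ) : Antitone fun t => μ.real {ω | t < f ω} :=
  fun _ _ hst => measureReal_mono fun _ h => hst.trans_lt h

theorem integral_comp_eq_integral_meas_lt_mul {f : Ω → ℝ} (hf0 : 0 ≤ᵐ[μ] f)
    (hf : AEMeasurable f μ) {g : ℝ → ℝ} (hg : ContinuousOn g (Ici 0))
    (hg0 : ∀ t, 0 ≤ t → 0 ≤ g t) (hint : Integrable (fun ω => ∫ t in 0..f ω, g t) μ) :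
    ∫ ω, (∫ t in 0..f ω, g t) ∂μ = ∫ t in Ioi 0, g t * μ.real {ω | t < f ω} := by
  have hlayer := lintegral_comp_eq_lintegral_meas_lt_mul μ hf0 hf
    (fun t ht => (hg.mono Icc_subset_Ici_self).intervalIntegrable_of_Icc ht.le)
    (ae_restrict_of_forall_mem measurableSet_Ioi fun t ht => hg0 t ht.le)
  rw [integral_eq_lintegral_of_nonneg_ae _ hint.aestronglyMeasurable, hlayer,
    integral_eq_lintegral_of_nonneg_ae, setLIntegral_congr_fun measurableSet_Ioi]
  · intro t (ht : 0 < t)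
    simp only [ENNReal.ofReal_mul (hg0 t ht.le), ofReal_measureReal (measure_ne_top _ _),
      mul_comm]
  · exact ae_restrict_of_forall_mem measurableSet_Ioi fun t (ht : 0 < t) =>
      mul_nonneg (hg0 t ht.le) measureReal_nonneg
  · exact ((hg.mono Ioi_subset_Ici_self).aestronglyMeasurable measurableSet_Ioi).mul
      (antitone_measureReal_lt f).measurable.aestronglyMeasurable
  · filter_upwards [hf0] with ω hω
    exact intervalIntegral.integral_nonneg hω fun t ht => hg0 t ht.1

theorem integral_cube_div_one_add_eq_integral_meas_lt_mul {f : Ω → ℝ} (hf0 : ∀ ω, 0 ≤ f ω)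
    (hf : Measurable f) (hint : Integrable (fun ω => f ω ^ 3 / (1 + f ω)) μ) :
    ∫ ω, f ω ^ 3 / (1 + f ω) ∂μ =
      ∫ y in Ioi 0, y ^ 2 * (3 + 2 * y) / (1 + y) ^ 2 * μ.real {ω | y < f ω} := by
  have hg : ContinuousOn (fun t : ℝ => t ^ 2 * (3 + 2 * t) / (1 + t) ^ 2) (Ici 0) :=
    ContinuousOn.div (by fun_prop) (by fun_prop) fun t (ht : 0 ≤ t) => by positivity
  have hG : ∀ u, 0 ≤ u → ∫ t in 0..u, t ^ 2 * (3 + 2 * t) / (1 + t) ^ 2 = u ^ 3 / (1 + u) := by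
    intro u hu
    have hderiv : ∀ t ∈ uIcc 0 u,
        HasDerivAt (fun t => t ^ 3 / (1 + t)) (t ^ 2 * (3 + 2 * t) / (1 + t) ^ 2) t := by
      intro t ht
      rw [uIcc_of_le hu] at ht
      have h1t : 1 + t ≠ 0 := by linarith [ht.1]
      exact ((hasDerivAt_pow 3 t).div ((hasDerivAt_id t).const_add 1) h1t).congr_deriv
        (by simp only [Nat.cast_ofNat, Nat.add_one_sub_one, id_eq, mul_one]; ring)
    rw [intervalIntegral.integral_eq_sub_of_hasDerivAt hderiv
      ((hg.mono (by simp [uIcc_of_le hu, Icc_subset_Ici_self])).intervalIntegrable)]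
    simp
  simp_rw [← hG _ (hf0 _)] at hint ⊢
  exact integral_comp_eq_integral_meas_lt_mul (ae_of_all _ hf0) hf.aemeasurable hg
    (fun t ht => by positivity) hint

theorem integral_sq_div_one_add_mul_sub_integral_sq {w : Ω → ℝ} (hw : Measurable w)
    (hw0 : ∀ ω, 0 ≤ w ω) (hw2 : Integrable (fun ω => w ω ^ 2) μ) {σ : ℝ} (hσ : 0 < σ) :
    ∫ ω, w ω ^ 2 / (1 + σ * w ω) ∂μ - ∫ ω, w ω ^ 2 ∂μ =
      -(σ ^ 2)⁻¹ * ∫ y in Ioi 0, y ^ 2 * (3 + 2 * y) / (1 + y) ^ 2 * μ.real {ω | y / σ < w ω} := by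
  have hcube : Integrable (fun ω => (σ * w ω) ^ 3 / (1 + σ * w ω)) μ := by
    refine (hw2.const_mul (σ ^ 2)).mono (by fun_prop : Measurable _).aestronglyMeasurable
      (ae_of_all _ fun ω => ?_)
    have hσw : 0 ≤ σ * w ω := mul_nonneg hσ.le (hw0 ω)
    rw [norm_of_nonneg (by positivity), norm_of_nonneg (by positivity),
      div_le_iff₀ (by positivity)]
    nlinarith [pow_nonneg hσw 2]
  have hsplit : ∀ ω, w ω ^ 2 / (1 + σ * w ω) =
      w ω ^ 2 - (σ ^ 2)⁻¹ * ((σ * w ω) ^ 3 / (1 + σ * w ω)) := fun ω => by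
    have : 1 + σ * w ω ≠ 0 := by nlinarith [mul_nonneg hσ.le (hw0 ω)]
    rw [eq_sub_iff_add_eq, mul_div_assoc', ← add_div, div_eq_iff this]
    field_simp
  have hset : ∀ y, {ω | y < σ * w ω} = {ω | y / σ < w ω} := fun y => by
    ext ω
    simp [div_lt_iff₀' hσ]
  simp_rw [hsplit]
  rw [integral_sub hw2 (hcube.const_mul _), integral_const_mul,
    integral_cube_div_one_add_eq_integral_meas_lt_mul (fun ω => mul_nonneg hσ.le (hw0 ω))
      (hw.const_mul σ) hcube]
  simp_rw [hset]
  ring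

theorem rpow_mul_integral_sq_div_one_add_mul_sub_integral_sq {w : Ω → ℝ} (hw : Measurable w)
    (hw0 : ∀ ω, 0 ≤ w ω) (hw2 : Integrable (fun ω => w ω ^ 2) μ) (α : ℝ) {σ : ℝ} (hσ : 0 < σ) :
    σ ^ (3 - α) * (∫ ω, w ω ^ 2 / (1 + σ * w ω) ∂μ - ∫ ω, w ω ^ 2 ∂μ) =
      -∫ y in Ioi 0, y ^ (-(α - 3)) * (3 + 2 * y) / (1 + y) ^ 2 *
        ((y / σ) ^ (α - 1) * μ.real {ω | y / σ < w ω}) := by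
  rw [integral_sq_div_one_add_mul_sub_integral_sq hw hw0 hw2 hσ, ← mul_assoc,
    ← integral_const_mul, ← integral_neg]
  refine setIntegral_congr_fun measurableSet_Ioi fun y (hy : 0 < y) => ?_
  have hy2 : y ^ (-(α - 3)) * y ^ (α - 1) = y ^ 2 := by
    rw [← rpow_add hy, show -(α - 3) + (α - 1) = 2 by ring, rpow_two]
  have hσ2 : σ ^ (3 - α) * σ ^ (α - 1) = σ ^ 2 := by
    rw [← rpow_add hσ, show 3 - α + (α - 1) = 2 by ring, rpow_two]
  have : σ ^ (3 - α) ≠ 0 := (rpow_pos_of_pos hσ _).ne'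
  simp only [div_rpow hy.le hσ.le, ← hy2, ← hσ2]
  field_simp

theorem integrable_sq_of_forall_rpow_mul_measureReal_lt_le {w : Ω → ℝ} (hw : Measurable w)
    (hw0 : ∀ ω, 0 ≤ w ω) {p K : ℝ} (hp : 2 < p)
    (hK : ∀ t > 0, t ^ p * μ.real {ω | t < w ω} ≤ K) :
    Integrable (fun ω => w ω ^ 2) μ := by
  have hmeas : ∀ s, AEStronglyMeasurable (fun t => t * μ.real {ω | t < w ω}) (volume.restrict s) :=
    fun _ => (measurable_id.mul (antitone_measureReal_lt w).measurable).aestronglyMeasurable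
  have hnear : IntegrableOn (fun t => t * μ.real {ω | t < w ω}) (Ioc 0 1) :=
    .of_bound measure_Ioc_lt_top (hmeas _) (μ.real univ) <|
      ae_restrict_of_forall_mem measurableSet_Ioc fun t ht => by
        rw [norm_of_nonneg (mul_nonneg ht.1.le measureReal_nonneg)]
        exact (mul_le_of_le_one_left measureReal_nonneg ht.2).trans
          (measureReal_mono (subset_univ _))
  have hfar : IntegrableOn (fun t => t * μ.real {ω | t < w ω}) (Ioi 1) := by
    refine ((integrableOn_Ioi_rpow_of_lt (by linarith : 1 - p < -1) one_pos).const_mul K).mono'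
      (hmeas _) (ae_restrict_of_forall_mem measurableSet_Ioi fun t (ht : 1 < t) => ?_)
    have ht0 : 0 < t := one_pos.trans ht
    rw [norm_of_nonneg (mul_nonneg ht0.le measureReal_nonneg)]
    calc t * μ.real {ω | t < w ω} = t ^ (1 - p) * (t ^ p * μ.real {ω | t < w ω}) := by
          rw [← mul_assoc, ← rpow_add ht0, sub_add_cancel, rpow_one]
      _ ≤ t ^ (1 - p) * K := mul_le_mul_of_nonneg_left (hK t ht0) (by positivity)
      _ = K * t ^ (1 - p) := mul_comm _ _
  have htail : IntegrableOn (fun t => t * μ.real {ω | t < w ω}) (Ioi 0) := by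
    rw [← Ioc_union_Ioi_eq_Ioi zero_le_one]
    exact hnear.union hfar
  refine ⟨(hw.pow_const 2).aestronglyMeasurable, ?_⟩
  rw [hasFiniteIntegral_iff_ofReal (ae_of_all _ fun ω => sq_nonneg _)]
  have hlayer :=
    lintegral_rpow_eq_lintegral_meas_lt_mul μ (ae_of_all _ hw0) hw.aemeasurable two_pos
  have hweight : ∫⁻ t in Ioi 0, μ {ω | t < w ω} * ENNReal.ofReal (t ^ ((2 : ℝ) - 1)) =
      ∫⁻ t in Ioi 0, ENNReal.ofReal (t * μ.real {ω | t < w ω}) :=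
    setLIntegral_congr_fun measurableSet_Ioi fun t (ht : 0 < t) => by
      rw [ENNReal.ofReal_mul ht.le, ofReal_measureReal (measure_ne_top _ _), mul_comm]
      norm_num
  calc ∫⁻ ω, ENNReal.ofReal (w ω ^ 2) ∂μ = ∫⁻ ω, ENNReal.ofReal (w ω ^ (2 : ℝ)) ∂μ := by
        simp_rw [rpow_two]
    _ < ⊤ := by
        rw [hlayer, hweight]
        exact ENNReal.mul_lt_top ENNReal.ofReal_lt_top htail.lintegral_lt_top

end

theorem tail_asymptotics_alpha_three_four_general
    {Ω : Type*} [MeasurableSpace Ω] (μ : Measure Ω) [IsProbabilityMeasure μ]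
    (w : Ω → ℝ) (hw_meas : Measurable w) (hw_nonneg : ∀ ω, 0 ≤ w ω)
    (C α : ℝ) (hα : α ∈ Set.Ioo (3 : ℝ) 4)
    (htail : Tendsto (fun x : ℝ => x ^ (α - 1) * (μ {ω | x < w ω}).toReal)
      atTop (𝓝 C)) :
    Integrable (fun ω => (w ω) ^ 2) μ ∧
    Tendsto (fun σ : ℝ =>
        σ ^ (3 - α) * ((∫ ω, (w ω) ^ 2 / (1 + σ * w ω) ∂μ) - ∫ ω, (w ω) ^ 2 ∂μ))
      (𝓝[>] 0) (𝓝 (C * (α - 1) * Real.pi / Real.sin (Real.pi * α))) := by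
  obtain ⟨hα3, hα4⟩ := hα
  obtain ⟨K, hK⟩ := exists_forall_rpow_mul_le_of_tendsto (by linarith : 0 ≤ α - 1) zero_le_one
    (fun _ => measureReal_le_one) htail
  have hw2 := integrable_sq_of_forall_rpow_mul_measureReal_lt_le hw_meas hw_nonneg
    (by linarith : 2 < α - 1) hK
  refine ⟨hw2, ?_⟩
  have hlim := tendsto_setIntegral_mul_comp_div
    (integrableOn_Ioi_rpow_neg_mul_three_add_two_mul_div_one_add_sq (s := α - 3) (by linarith)
      (by linarith))
    ((measurable_id.pow_const _).mul (antitone_measureReal_lt w).measurable)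
    (fun x hx => (abs_of_nonneg (mul_nonneg (rpow_nonneg hx.le _) measureReal_nonneg)).trans_le
      (hK x hx)) htail
  rw [integral_Ioi_rpow_neg_mul_three_add_two_mul_div_one_add_sq (by linarith) (by linarith)]
    at hlim
  have hvalue : -((α - 3 + 2) * π / sin (π * (α - 3)) * C) = C * (α - 1) * π / sin (π * α) := by
    rw [show π * (α - 3) = π * α - π - 2 * π by ring, sin_sub_two_pi, sin_sub_pi, div_neg]
    ring
  rw [← hvalue]
  refine hlim.neg.congr' ?_
  filter_upwards [self_mem_nhdsWithin] with σ hσ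
  exact (rpow_mul_integral_sq_div_one_add_mul_sub_integral_sq hw_meas hw_nonneg hw2 α hσ).symm

/-- Let `w ≥ 0` with tail `P(w > x) ~ C x^{-(α-1)}` for some `C > 0`
and `α ∈ (3,4)`. Then `E[w²] < ∞` and
`σ^{3−α}(E[w²/(1+σw)] − E[w²]) → C(α−1)π/sin(πα)` as `σ → 0⁺`. -/
theorem tail_asymptotics_alpha_three_four
    {Ω : Type*} [MeasurableSpace Ω] (μ : Measure Ω) [IsProbabilityMeasure μ]
    (w : Ω → ℝ) (hw_meas : Measurable w) (hw_nonneg : ∀ ω, 0 ≤ w ω)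
    (C α : ℝ) (hC : 0 < C) (hα : α ∈ Set.Ioo (3 : ℝ) 4)
    (htail : Tendsto (fun x : ℝ => x ^ (α - 1) * (μ {ω | x < w ω}).toReal)
      atTop (𝓝 C)) :
    Integrable (fun ω => (w ω) ^ 2) μ ∧
    Tendsto (fun σ : ℝ =>
        σ ^ (3 - α) * ((∫ ω, (w ω) ^ 2 / (1 + σ * w ω) ∂μ) - ∫ ω, (w ω) ^ 2 ∂μ))
      (𝓝[>] 0) (𝓝 (C * (α - 1) * Real.pi / Real.sin (Real.pi * α))) :=
  tail_asymptotics_alpha_three_four_general μ w hw_meas hw_nonneg C α hα htail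
end

section
/- Let w be a nonnegative real random variable and let C > 0 be such that lim_{x→∞} x² P(w > x) = C (tail exponent α = 3). Then for every δ > 0 there is a unique σ(δ) > 0 with δ·E[w²/(1+σ(δ)w)] = 1, and lim_{δ→0⁺} δ · log σ(δ) = −1/(2C). -/
open MeasureTheory Filter Real Set Asymptotics
open scoped Topology

/-!
Write `F(σ) = E[w²/(1+σw)]` and `T(M) = E[min(w,M)²]`. By the layer cake formula
`T(M) = ∫₀^{M²} P(w > √t) dt`, and `t · P(w > √t) → C`, so `T(M) ~ 2C log M`.
The pointwise bounds `min(w,M)² ≤ (1+σM) · w²/(1+σw)` and, for `M = 1/σ`,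
`w²/(1+σw) ≤ min(w,M)² + M (w - min(w,M))`, together with `E[w - min(w,M)] = O(1/M)`,
squeeze `F(σ) ~ 2C log(1/σ)` as `σ → 0⁺`.

`F` is continuous and strictly decreasing on `(0,∞)` with `F(σ) ≤ E[w]/σ`, so `δ F(σ) = 1` has
exactly one solution `σ(δ)`, and `σ(δ) ≤ δ E[w] → 0`. Hence
`δ log σ(δ) = -log(1/σ(δ)) / F(σ(δ)) → -1/(2C)`.
-/

theorem norm_intervalIntegral_sub_mul_inv_le {f : ℝ → ℝ} {L ε a b : ℝ} (ha : 0 < a) (hab : a ≤ b)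
    (hε : ∀ t ∈ Ioc a b, ‖t * f t - L‖ ≤ ε) :
    ‖∫ t in a..b, (f t - L * t⁻¹)‖ ≤ ε * log (b / a) := by
  have h0 : (0 : ℝ) ∉ uIcc a b := by rw [uIcc_of_le hab]; exact fun h => by linarith [h.1]
  have hinv : IntervalIntegrable (fun t : ℝ => t⁻¹) volume a b :=
    intervalIntegral.intervalIntegrable_inv (fun t ht => by rintro rfl; exact h0 ht)
      continuousOn_id
  rw [← integral_inv h0, ← intervalIntegral.integral_const_mul]
  refine intervalIntegral.norm_integral_le_of_norm_le hab
    (Eventually.of_forall fun t ht => ?_) (hinv.const_mul ε)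
  have ht : 0 < t := ha.trans ht.1
  calc ‖f t - L * t⁻¹‖ = ‖(t * f t - L) * t⁻¹‖ := by
        rw [sub_mul, mul_comm t, mul_inv_cancel_right₀ ht.ne']
    _ ≤ ε * t⁻¹ := by rw [norm_mul, norm_inv, norm_of_nonneg ht.le]; gcongr; exact hε t ‹_›

theorem isLittleO_intervalIntegral_sub_mul_log {f : ℝ → ℝ} {L : ℝ}
    (hf : ∀ X, IntervalIntegrable f volume 0 X) (hlim : Tendsto (fun t => t * f t) atTop (𝓝 L)) :
    (fun X => (∫ t in (0)..X, f t) - L * log X) =o[atTop] log := by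
  refine isLittleO_iff.2 fun ε hε => ?_
  obtain ⟨x₀, hx₀⟩ := eventually_atTop.1 <|
    (hlim.eventually (Metric.closedBall_mem_nhds L (half_pos hε))).and (eventually_ge_atTop 1)
  have hx₀_one : 1 ≤ x₀ := (hx₀ x₀ le_rfl).2
  set A := (∫ t in (0)..x₀, f t) - L * log x₀
  filter_upwards [eventually_ge_atTop x₀, tendsto_log_atTop.eventually_ge_atTop (2 * |A| / ε)]
    with X hX hAX
  have hx₀X := (hf x₀).symm.trans (hf X)
  have h0 : (0 : ℝ) ∉ uIcc x₀ X := by rw [uIcc_of_le hX]; exact fun h => by linarith [h.1]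
  have hinv : IntervalIntegrable (fun t : ℝ => t⁻¹) volume x₀ X :=
    intervalIntegral.intervalIntegrable_inv (fun t ht => by rintro rfl; exact h0 ht)
      continuousOn_id
  have hsplit : (∫ t in (0)..X, f t) - L * log X = A + ∫ t in x₀..X, (f t - L * t⁻¹) := by
    rw [intervalIntegral.integral_sub hx₀X (hinv.const_mul L),
      intervalIntegral.integral_const_mul, integral_inv h0,
      ← intervalIntegral.integral_add_adjacent_intervals (hf x₀) hx₀X,
      log_div (by linarith) (by linarith)]
    ring
  have hbound := norm_intervalIntegral_sub_mul_inv_le (by linarith) hX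
    fun t ht => by simpa [dist_eq_norm] using (hx₀ t ht.1.le).1
  rw [log_div (by linarith) (by linarith)] at hbound
  have := log_nonneg hx₀_one
  have := (div_le_iff₀' hε).1 hAX
  rw [hsplit, norm_of_nonneg (log_nonneg (hx₀_one.trans hX))]
  calc ‖A + ∫ t in x₀..X, (f t - L * t⁻¹)‖ ≤ |A| + ε / 2 * (log X - log x₀) :=
        (norm_add_le _ _).trans (add_le_add_right hbound _)
    _ ≤ ε * log X := by nlinarith

theorem tendsto_intervalIntegral_div_log {f : ℝ → ℝ} {L : ℝ}
    (hf : ∀ X, IntervalIntegrable f volume 0 X) (hlim : Tendsto (fun t => t * f t) atTop (𝓝 L)) :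
    Tendsto (fun X => (∫ t in (0)..X, f t) / log X) atTop (𝓝 L) := by
  have := ((isLittleO_intervalIntegral_sub_mul_log hf hlim).tendsto_div_nhds_zero).add_const L
  rw [zero_add] at this
  refine this.congr' ?_
  filter_upwards [tendsto_log_atTop.eventually_gt_atTop 0] with X hX
  field_simp
  ring

theorem tendsto_div_log_atTop : Tendsto (fun u => u / log u) atTop atTop := by
  have h := isLittleO_log_id_atTop.tendsto_div_nhds_zero
  have hpos : ∀ᶠ u in atTop, 0 < log u / id u := by
    filter_upwards [eventually_gt_atTop 1] with u hu
    exact div_pos (log_pos hu) (by simp; linarith)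
  refine (tendsto_inv_nhdsGT_zero.comp (tendsto_nhdsWithin_iff.2 ⟨h, hpos⟩)).congr fun u => ?_
  simp

theorem tendsto_log_div_log_div_log : Tendsto (fun u => log (u / log u) / log u) atTop (𝓝 1) := by
  have h := (isLittleO_log_id_atTop.comp_tendsto tendsto_log_atTop).tendsto_div_nhds_zero
  have := h.const_sub 1
  rw [sub_zero] at this
  refine this.congr' ?_
  filter_upwards [eventually_gt_atTop 1] with u hu
  have := log_pos hu
  rw [log_div (by linarith) this.ne']
  simp only [Function.comp, id]
  field_simp

theorem lintegral_Ioi_ofReal_div_add_sq {K M : ℝ} (hK : 0 ≤ K) (hM : 0 < M) :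
    ∫⁻ t in Ioi 0, ENNReal.ofReal (K / (M + t) ^ 2) = ENNReal.ofReal (K / M) := by
  have hderiv : ∀ t ∈ Ici (0 : ℝ), HasDerivAt (fun t => -K * (M + t)⁻¹) (K / (M + t) ^ 2) t :=
    fun t (ht : 0 ≤ t) =>
      ((((hasDerivAt_id t).const_add M).inv (by simp; linarith)).const_mul (-K)).congr_deriv
        (by simp [div_eq_mul_inv])
  have hnonneg : ∀ t ∈ Ioi (0 : ℝ), 0 ≤ K / (M + t) ^ 2 := fun t _ => by positivity
  have hlim : Tendsto (fun t => -K * (M + t)⁻¹) atTop (𝓝 0) := by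
    simpa using
      (tendsto_inv_atTop_zero.comp (tendsto_atTop_add_const_left _ M tendsto_id)).const_mul (-K)
  rw [← ofReal_integral_eq_lintegral_ofReal (integrableOn_Ioi_deriv_of_nonneg' hderiv hnonneg hlim)
    ((ae_restrict_iff' measurableSet_Ioi).2 (Eventually.of_forall hnonneg)),
    integral_Ioi_of_hasDerivAt_of_nonneg' hderiv hnonneg hlim]
  simp [div_eq_mul_inv]

theorem sq_div_one_add_mul_le_div {x σ : ℝ} (hx : 0 ≤ x) (hσ : 0 < σ) :
    x ^ 2 / (1 + σ * x) ≤ x / σ := by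
  rw [div_le_div_iff₀ (by positivity) hσ]
  nlinarith

theorem min_sq_le_mul_sq_div {x σ M : ℝ} (hx : 0 ≤ x) (hσ : 0 ≤ σ) (hM : 0 ≤ M) :
    min x M ^ 2 ≤ (1 + σ * M) * (x ^ 2 / (1 + σ * x)) := by
  rw [mul_div_assoc', le_div_iff₀ (by positivity)]
  rcases le_total x M with h | h
  · rw [min_eq_left h]
    nlinarith [mul_le_mul_of_nonneg_left h (by positivity : 0 ≤ σ * x ^ 2)]
  · rw [min_eq_right h]
    nlinarith [mul_le_mul_of_nonneg_left h (by positivity : 0 ≤ σ * M * x),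
      mul_le_mul h h hM hx]

theorem sq_div_le_min_sq_add {x M : ℝ} (hx : 0 ≤ x) (hM : 0 < M) :
    x ^ 2 / (1 + M⁻¹ * x) ≤ min x M ^ 2 + M * (x - min x M) := by
  rcases le_total x M with h | h
  · rw [min_eq_left h, sub_self, mul_zero, add_zero]
    exact div_le_self (sq_nonneg x) (by simp; positivity)
  · rw [min_eq_right h]
    calc x ^ 2 / (1 + M⁻¹ * x) ≤ x / M⁻¹ := sq_div_one_add_mul_le_div hx (inv_pos.2 hM)
      _ = M ^ 2 + M * (x - M) := by field_simp; ring

section MeanField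

variable {Ω : Type*} [MeasurableSpace Ω] {μ : Measure Ω} {w : Ω → ℝ}

theorem integrable_min_const [IsFiniteMeasure μ] (hw : AEMeasurable w μ)
    (hw_nonneg : ∀ ω, 0 ≤ w ω) {M : ℝ} (hM : 0 ≤ M) : Integrable (fun ω => min (w ω) M) μ :=
  .of_bound (by fun_prop) M (Eventually.of_forall fun ω => by
    rw [Real.norm_of_nonneg (le_min (hw_nonneg ω) hM)]; exact min_le_right _ _)

theorem integrable_min_const_sq [IsFiniteMeasure μ] (hw : AEMeasurable w μ)
    (hw_nonneg : ∀ ω, 0 ≤ w ω) {M : ℝ} (hM : 0 ≤ M) : Integrable (fun ω => min (w ω) M ^ 2) μ :=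
  .of_bound (by fun_prop) (M ^ 2) (Eventually.of_forall fun ω => by
    have := le_min (hw_nonneg ω) hM
    rw [Real.norm_of_nonneg (by positivity)]
    exact pow_le_pow_left₀ this (min_le_right _ _) 2)

noncomputable def meanFieldIntegral (μ : Measure Ω) (w : Ω → ℝ) (σ : ℝ) : ℝ :=
  ∫ ω, w ω ^ 2 / (1 + σ * w ω) ∂μ

theorem integrable_sq_div_one_add_mul (hw : Integrable w μ) (hw_nonneg : ∀ ω, 0 ≤ w ω)
    {σ : ℝ} (hσ : 0 < σ) : Integrable (fun ω => w ω ^ 2 / (1 + σ * w ω)) μ := by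
  have := hw.aemeasurable
  refine (hw.div_const σ).mono' (by fun_prop : AEMeasurable _ μ).aestronglyMeasurable
    (Eventually.of_forall fun ω => ?_)
  have := hw_nonneg ω
  rw [Real.norm_of_nonneg (by positivity)]
  exact sq_div_one_add_mul_le_div this hσ

theorem meanFieldIntegral_le_integral_div (hw : Integrable w μ) (hw_nonneg : ∀ ω, 0 ≤ w ω)
    {σ : ℝ} (hσ : 0 < σ) : meanFieldIntegral μ w σ ≤ (∫ ω, w ω ∂μ) / σ := by
  rw [← integral_div]
  exact integral_mono (integrable_sq_div_one_add_mul hw hw_nonneg hσ) (hw.div_const σ)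
    fun ω => sq_div_one_add_mul_le_div (hw_nonneg ω) hσ

theorem meanFieldIntegral_continuousOn (hw : Integrable w μ) (hw_nonneg : ∀ ω, 0 ≤ w ω) :
    ContinuousOn (meanFieldIntegral μ w) (Ioi 0) := by
  intro σ₀ (hσ₀ : 0 < σ₀)
  have := hw.aemeasurable
  refine (continuousAt_of_dominated (F := fun σ ω => w ω ^ 2 / (1 + σ * w ω))
    (bound := fun ω => w ω / (σ₀ / 2))
    (Eventually.of_forall fun σ => (by fun_prop : AEMeasurable _ μ).aestronglyMeasurable) ?_
    (hw.div_const _)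
    (Eventually.of_forall fun ω => ?_)).continuousWithinAt
  · filter_upwards [eventually_gt_nhds (half_lt_self hσ₀)] with σ hσ
    refine Eventually.of_forall fun ω => ?_
    have hσ_pos : 0 < σ := (half_pos hσ₀).trans hσ
    have := hw_nonneg ω
    rw [Real.norm_of_nonneg (by positivity)]
    exact (sq_div_one_add_mul_le_div this hσ_pos).trans
      (div_le_div_of_nonneg_left this (half_pos hσ₀) hσ.le)
  · have := hw_nonneg ω
    exact continuousAt_const.div (by fun_prop) (by positivity)

theorem meanFieldIntegral_strictAntiOn (hw : Integrable w μ) (hw_nonneg : ∀ ω, 0 ≤ w ω)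
    (hw_pos : μ {ω | 0 < w ω} ≠ 0) : StrictAntiOn (meanFieldIntegral μ w) (Ioi 0) := by
  intro σ₁ (hσ₁ : 0 < σ₁) σ₂ (hσ₂ : 0 < σ₂) h12
  have hle : ∀ ω, w ω ^ 2 / (1 + σ₂ * w ω) ≤ w ω ^ 2 / (1 + σ₁ * w ω) := fun ω => by
    have := hw_nonneg ω
    gcongr
  have hlt : ∀ ω, 0 < w ω → w ω ^ 2 / (1 + σ₂ * w ω) < w ω ^ 2 / (1 + σ₁ * w ω) := fun ω h => by
    gcongr
  have hint₁ := integrable_sq_div_one_add_mul hw hw_nonneg hσ₁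
  have hint₂ := integrable_sq_div_one_add_mul hw hw_nonneg hσ₂
  rw [← sub_pos, meanFieldIntegral, meanFieldIntegral, ← integral_sub hint₁ hint₂,
    integral_pos_iff_support_of_nonneg (fun ω => sub_nonneg.2 (hle ω)) (hint₁.sub hint₂)]
  refine pos_iff_ne_zero.2 fun h0 => hw_pos (measure_mono_null (fun ω hω => ?_) h0)
  exact (sub_pos.2 (hlt ω hω)).ne'

theorem integral_min_sq_le_mul_meanFieldIntegral (hw : Integrable w μ)
    (hw_nonneg : ∀ ω, 0 ≤ w ω) {σ M : ℝ} (hσ : 0 < σ) (hM : 0 ≤ M) :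
    ∫ ω, min (w ω) M ^ 2 ∂μ ≤ (1 + σ * M) * meanFieldIntegral μ w σ := by
  rw [meanFieldIntegral, ← integral_const_mul]
  refine integral_mono_of_nonneg (Eventually.of_forall fun ω => sq_nonneg _)
    ((integrable_sq_div_one_add_mul hw hw_nonneg hσ).const_mul _)
    (Eventually.of_forall fun ω => min_sq_le_mul_sq_div (hw_nonneg ω) hσ.le hM)

theorem meanFieldIntegral_inv_le [IsFiniteMeasure μ] (hw : Integrable w μ)
    (hw_nonneg : ∀ ω, 0 ≤ w ω) {M : ℝ} (hM : 0 < M) :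
    meanFieldIntegral μ w M⁻¹ ≤
      ∫ ω, min (w ω) M ^ 2 ∂μ + M * ∫ ω, (w ω - min (w ω) M) ∂μ := by
  have hmin_sq := integrable_min_const_sq hw.aemeasurable hw_nonneg hM.le
  have hexcess : Integrable (fun ω => w ω - min (w ω) M) μ :=
    hw.sub (integrable_min_const hw.aemeasurable hw_nonneg hM.le)
  rw [← integral_const_mul, ← integral_add hmin_sq (hexcess.const_mul M)]
  exact integral_mono (integrable_sq_div_one_add_mul hw hw_nonneg (inv_pos.2 hM))
    (hmin_sq.add (hexcess.const_mul M)) fun ω => sq_div_le_min_sq_add (hw_nonneg ω) hM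

section TailBound

variable [IsFiniteMeasure μ] {K M : ℝ} (hw : AEMeasurable w μ) (hM : 0 < M)
  (htail : ∀ x ≥ M, μ.real {ω | x < w ω} ≤ K / x ^ 2)
include hw hM htail

theorem lintegral_sub_min_le_of_tail_le :
    ∫⁻ ω, ENNReal.ofReal (w ω - min (w ω) M) ∂μ ≤ ENNReal.ofReal (K / M) := by
  have hK : 0 ≤ K := by
    have := measureReal_nonneg.trans (htail M le_rfl)
    rwa [le_div_iff₀ (by positivity), zero_mul] at this
  rw [lintegral_eq_lintegral_meas_lt μ (Eventually.of_forall fun ω => by simp) (by fun_prop),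
    ← lintegral_Ioi_ofReal_div_add_sq hK hM]
  refine setLIntegral_mono' measurableSet_Ioi fun t (ht : 0 < t) => ?_
  have hset : {ω | t < w ω - min (w ω) M} = {ω | M + t < w ω} := by
    ext ω
    rcases le_total (w ω) M with h | h <;> simp [h] <;> constructor <;> intro <;> linarith
  rw [hset, ← ofReal_measureReal]
  exact ENNReal.ofReal_le_ofReal (htail _ (by linarith))

theorem integrable_of_tail_le (hw_nonneg : ∀ ω, 0 ≤ w ω) : Integrable w μ := by
  have hexcess : Integrable (fun ω => w ω - min (w ω) M) μ :=
    ⟨by fun_prop, (hasFiniteIntegral_iff_ofReal (Eventually.of_forall fun ω => by simp)).2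
      ((lintegral_sub_min_le_of_tail_le hw hM htail).trans_lt ENNReal.ofReal_lt_top)⟩
  exact ((integrable_min_const hw hw_nonneg hM.le).add hexcess).congr
    (Eventually.of_forall fun ω => add_sub_cancel _ _)

theorem integral_sub_min_le_of_tail_le : ∫ ω, (w ω - min (w ω) M) ∂μ ≤ K / M := by
  rw [integral_eq_lintegral_of_nonneg_ae (Eventually.of_forall fun ω => by simp) (by fun_prop)]
  refine ENNReal.toReal_le_of_le_ofReal ?_ (lintegral_sub_min_le_of_tail_le hw hM htail)
  have := measureReal_nonneg.trans (htail M le_rfl)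
  rw [le_div_iff₀ (by positivity), zero_mul] at this
  positivity

theorem meanFieldIntegral_inv_le_of_tail_le (hw_nonneg : ∀ ω, 0 ≤ w ω) :
    meanFieldIntegral μ w M⁻¹ ≤ ∫ ω, min (w ω) M ^ 2 ∂μ + K := by
  refine (meanFieldIntegral_inv_le (integrable_of_tail_le hw hM htail hw_nonneg) hw_nonneg hM).trans
    (add_le_add_right ?_ _)
  calc M * ∫ ω, (w ω - min (w ω) M) ∂μ ≤ M * (K / M) :=
        mul_le_mul_of_nonneg_left (integral_sub_min_le_of_tail_le hw hM htail) hM.le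
    _ = K := mul_div_cancel₀ K hM.ne'

end TailBound

theorem integral_min_sq_eq_intervalIntegral [IsFiniteMeasure μ] (hw : AEMeasurable w μ)
    (hw_nonneg : ∀ ω, 0 ≤ w ω) {M : ℝ} (hM : 0 ≤ M) :
    ∫ ω, min (w ω) M ^ 2 ∂μ = ∫ t in (0)..M ^ 2, μ.real {ω | √t < w ω} := by
  have hlevel : EqOn (fun t => μ.real {ω | t < min (w ω) M ^ 2})
      ((Iio (M ^ 2)).indicator fun t => μ.real {ω | √t < w ω}) (Ioi 0) := fun t (ht : 0 < t) => by
    have hsq : ∀ a : ℝ, 0 ≤ a → (t < a ^ 2 ↔ √t < a) := fun a ha => by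
      rw [← sqrt_lt_sqrt_iff ht.le, sqrt_sq ha]
    by_cases htM : t < M ^ 2
    · have : {ω | t < min (w ω) M ^ 2} = {ω | √t < w ω} := by
        ext ω
        simp only [mem_ofPred_eq, hsq _ (le_min (hw_nonneg ω) hM), lt_min_iff,
          (hsq M hM).1 htM, and_true]
      simp [htM, this]
    · have : {ω | t < min (w ω) M ^ 2} = ∅ := by
        ext ω
        simp only [mem_ofPred_eq, mem_empty_iff_false, iff_false, not_lt]
        exact (pow_le_pow_left₀ (le_min (hw_nonneg ω) hM) (min_le_right _ _) 2).trans
          (not_lt.1 htM)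
      simp [htM, this]
  rw [(integrable_min_const_sq hw hw_nonneg hM).integral_eq_integral_meas_lt
      (Eventually.of_forall fun ω => sq_nonneg _),
    setIntegral_congr_fun measurableSet_Ioi hlevel, setIntegral_indicator measurableSet_Iio,
    intervalIntegral.integral_of_le (by positivity), integral_Ioc_eq_integral_Ioo, Ioi_inter_Iio]

theorem tendsto_integral_min_sq_div_log [IsFiniteMeasure μ] (hw : AEMeasurable w μ)
    (hw_nonneg : ∀ ω, 0 ≤ w ω) {C : ℝ}
    (htail : Tendsto (fun x => x ^ 2 * μ.real {ω | x < w ω}) atTop (𝓝 C)) :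
    Tendsto (fun M => (∫ ω, min (w ω) M ^ 2 ∂μ) / log M) atTop (𝓝 (2 * C)) := by
  set G : ℝ → ℝ := fun t => μ.real {ω | √t < w ω}
  have hG_anti : Antitone G := fun s t hst =>
    measureReal_mono (fun ω (h : √t < w ω) => (sqrt_le_sqrt hst).trans_lt h)
  have hG : Tendsto (fun t => t * G t) atTop (𝓝 C) :=
    (htail.comp tendsto_sqrt_atTop).congr' <| by
      filter_upwards [eventually_ge_atTop 0] with t ht
      simp [G, sq_sqrt ht]
  have := ((tendsto_intervalIntegral_div_log (fun X => hG_anti.intervalIntegrable) hG).comp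
    (tendsto_pow_atTop two_ne_zero)).const_mul 2
  refine this.congr' ?_
  filter_upwards [eventually_gt_atTop 0] with M hM
  rw [Function.comp_apply, integral_min_sq_eq_intervalIntegral hw hw_nonneg hM.le, log_pow]
  push_cast
  field_simp
  rfl

section Asymptotics

variable {C : ℝ} (htail : Tendsto (fun x => x ^ 2 * μ.real {ω | x < w ω}) atTop (𝓝 C))
include htail

theorem exists_tail_le_of_tendsto : ∃ M > 0, ∀ x ≥ M, μ.real {ω | x < w ω} ≤ (C + 1) / x ^ 2 := by
  obtain ⟨M, hM⟩ := eventually_atTop.1 <|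
    (htail.eventually (eventually_le_nhds (lt_add_one C))).and (eventually_gt_atTop 0)
  refine ⟨M, (hM M le_rfl).2, fun x hx => ?_⟩
  rw [le_div_iff₀ (by nlinarith [(hM x hx).2]), mul_comm]
  exact (hM x hx).1

theorem measure_pos_ne_zero_of_tendsto (hC : C ≠ 0) : μ {ω | 0 < w ω} ≠ 0 := by
  obtain ⟨x, hx, hx_nonneg⟩ := ((htail.eventually_ne hC).and (eventually_ge_atTop 0)).exists
  refine fun h0 => hx ?_
  have : μ {ω | x < w ω} = 0 :=
    measure_mono_null (fun ω (h : x < w ω) => hx_nonneg.trans_lt h) h0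
  simp [Measure.real, this]

theorem tendsto_meanFieldIntegral_inv_div_log [IsFiniteMeasure μ] (hw : AEMeasurable w μ)
    (hw_nonneg : ∀ ω, 0 ≤ w ω) :
    Tendsto (fun u => meanFieldIntegral μ w u⁻¹ / log u) atTop (𝓝 (2 * C)) := by
  obtain ⟨x₀, hx₀, hx₀_tail⟩ := exists_tail_le_of_tendsto htail
  have hw_int := integrable_of_tail_le hw hx₀ hx₀_tail hw_nonneg
  have hT := tendsto_integral_min_sq_div_log hw hw_nonneg htail
  -- With `σ = u⁻¹` and `M = u / log u`, the factor `1 + σ M = 1 + (log u)⁻¹` tends to `1`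
  -- while `log M ~ log u`.
  have hlower : Tendsto (fun u => (∫ ω, min (w ω) (u / log u) ^ 2 ∂μ) / log (u / log u) *
      (log (u / log u) / log u) / (1 + (log u)⁻¹)) atTop (𝓝 (2 * C)) := by
    have := ((hT.comp tendsto_div_log_atTop).mul tendsto_log_div_log_div_log).div
      (tendsto_log_atTop.inv_tendsto_atTop.const_add 1) (by norm_num)
    rwa [mul_one, add_zero, div_one] at this
  have hupper : Tendsto (fun u => (∫ ω, min (w ω) u ^ 2 ∂μ) / log u + (C + 1) / log u) atTop
      (𝓝 (2 * C)) := by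
    simpa using hT.add (tendsto_const_nhds.div_atTop tendsto_log_atTop)
  refine tendsto_of_tendsto_of_tendsto_of_le_of_le' hlower hupper ?_ ?_
  · filter_upwards [eventually_gt_atTop 1, tendsto_div_log_atTop.eventually_gt_atTop 1]
      with u hu hm
    have hlog := log_pos hu
    have hlogm := log_pos hm
    have := integral_min_sq_le_mul_meanFieldIntegral hw_int hw_nonneg (σ := u⁻¹)
      (inv_pos.2 (by linarith)) (by positivity : 0 ≤ u / log u)
    rw [show 1 + u⁻¹ * (u / log u) = 1 + (log u)⁻¹ by field_simp] at this
    calc _ = (∫ ω, min (w ω) (u / log u) ^ 2 ∂μ) / (1 + (log u)⁻¹) / log u := by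
          field_simp
      _ ≤ meanFieldIntegral μ w u⁻¹ / log u := by
          gcongr
          rwa [div_le_iff₀' (by positivity)]
  · filter_upwards [eventually_ge_atTop x₀, eventually_gt_atTop 1] with u hu hu_one
    rw [← add_div, div_le_div_iff_of_pos_right (log_pos hu_one)]
    exact meanFieldIntegral_inv_le_of_tail_le hw (hx₀.trans_le hu)
      (fun x hx => hx₀_tail x (hu.trans hx)) hw_nonneg

theorem tendsto_meanFieldIntegral_inv_atTop [IsFiniteMeasure μ] (hC : 0 < C) (hw : AEMeasurable w μ)
    (hw_nonneg : ∀ ω, 0 ≤ w ω) : Tendsto (fun u => meanFieldIntegral μ w u⁻¹) atTop atTop := by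
  refine ((tendsto_meanFieldIntegral_inv_div_log htail hw hw_nonneg).pos_mul_atTop
    (by positivity) tendsto_log_atTop).congr' ?_
  filter_upwards [eventually_gt_atTop 1] with u hu
  exact div_mul_cancel₀ _ (log_pos hu).ne'

end Asymptotics

theorem existsUnique_pos_mul_meanFieldIntegral_eq_one (hw : Integrable w μ)
    (hw_nonneg : ∀ ω, 0 ≤ w ω) (hw_pos : μ {ω | 0 < w ω} ≠ 0)
    (hunbdd : Tendsto (fun u => meanFieldIntegral μ w u⁻¹) atTop atTop) {δ : ℝ} (hδ : 0 < δ) :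
    ∃! σ, 0 < σ ∧ δ * meanFieldIntegral μ w σ = 1 := by
  simp only [mul_eq_one_iff_inv_eq₀ hδ.ne']
  obtain ⟨u, hu, hu_pos⟩ := ((hunbdd.eventually_ge_atTop δ⁻¹).and (eventually_gt_atTop 0)).exists
  set σ₂ := max u⁻¹ (δ * ∫ ω, w ω ∂μ)
  have hσ₂ : 0 < σ₂ := (inv_pos.2 hu_pos).trans_le (le_max_left _ _)
  have hσ₂_le : meanFieldIntegral μ w σ₂ ≤ δ⁻¹ := by
    refine (meanFieldIntegral_le_integral_div hw hw_nonneg hσ₂).trans ?_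
    rw [div_le_iff₀ hσ₂, ← div_eq_inv_mul, le_div_iff₀' hδ]
    exact le_max_right _ _
  obtain ⟨σ, hσ, hσ_eq⟩ := intermediate_value_Icc' (le_max_left _ _)
    ((meanFieldIntegral_continuousOn hw hw_nonneg).mono fun τ hτ =>
      (inv_pos.2 hu_pos).trans_le hτ.1) ⟨hσ₂_le, hu⟩
  have hσ_pos : 0 < σ := (inv_pos.2 hu_pos).trans_le hσ.1
  exact ⟨σ, ⟨hσ_pos, hσ_eq.symm⟩, fun τ ⟨hτ, hτ_eq⟩ =>
    (meanFieldIntegral_strictAntiOn hw hw_nonneg hw_pos).injOn hτ hσ_pos (hτ_eq ▸ hσ_eq.symm ▸ rfl)⟩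

theorem le_mul_integral_of_mul_meanFieldIntegral_eq_one (hw : Integrable w μ)
    (hw_nonneg : ∀ ω, 0 ≤ w ω) {δ σ : ℝ} (hδ : 0 < δ) (hσ : 0 < σ)
    (h : δ * meanFieldIntegral μ w σ = 1) : σ ≤ δ * ∫ ω, w ω ∂μ := by
  have := mul_le_mul_of_nonneg_left (meanFieldIntegral_le_integral_div hw hw_nonneg hσ) hδ.le
  rw [h, mul_div_assoc', le_div_iff₀ hσ, one_mul] at this
  exact this

theorem tendsto_nhdsGT_zero_of_mul_meanFieldIntegral_eq_one (hw : Integrable w μ)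
    (hw_nonneg : ∀ ω, 0 ≤ w ω) {s : ℝ → ℝ}
    (hs : ∀ δ, 0 < δ → 0 < s δ ∧ δ * meanFieldIntegral μ w (s δ) = 1) :
    Tendsto s (𝓝[>] 0) (𝓝[>] 0) := by
  have hs_pos : ∀ᶠ δ in 𝓝[>] 0, 0 < s δ := eventually_nhdsWithin_of_forall fun δ hδ => (hs δ hδ).1
  have hs_le : ∀ᶠ δ in 𝓝[>] 0, s δ ≤ δ * ∫ ω, w ω ∂μ :=
    eventually_nhdsWithin_of_forall fun δ hδ =>
      le_mul_integral_of_mul_meanFieldIntegral_eq_one hw hw_nonneg hδ (hs δ hδ).1 (hs δ hδ).2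
  have hbound : Tendsto (fun δ => δ * ∫ ω, w ω ∂μ) (𝓝[>] 0) (𝓝 0) := by
    simpa using (tendsto_id.mul_const (∫ ω, w ω ∂μ)).mono_left (nhdsWithin_le_nhds (a := 0))
  exact tendsto_nhdsWithin_iff.2 ⟨tendsto_of_tendsto_of_tendsto_of_le_of_le' tendsto_const_nhds
    hbound (hs_pos.mono fun _ h => h.le) hs_le, hs_pos⟩

end MeanField

/-- Let `w ≥ 0` with tail `P(w > x) ~ C x^{-2}`, `C > 0`
(tail exponent `α = 3`). Then for every `δ > 0` there is a unique `σ(δ) > 0` with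
`δ·E[w²/(1+σ(δ)w)] = 1`, and `δ·log σ(δ) → −1/(2C)` as `δ → 0⁺`. -/
theorem critical_exponent_alpha_three
    {Ω : Type*} [MeasurableSpace Ω] (μ : Measure Ω) [IsProbabilityMeasure μ]
    (w : Ω → ℝ) (hw_meas : Measurable w) (hw_nonneg : ∀ ω, 0 ≤ w ω)
    (C : ℝ) (hC : 0 < C)
    (htail : Tendsto (fun x : ℝ => x ^ 2 * (μ {ω | x < w ω}).toReal)
      atTop (𝓝 C)) :
    (∀ δ : ℝ, 0 < δ →
      ∃! σ : ℝ, 0 < σ ∧ δ * ∫ ω, (w ω) ^ 2 / (1 + σ * w ω) ∂μ = 1) ∧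
    ∀ sf : ℝ → ℝ,
      (∀ δ : ℝ, 0 < δ →
        0 < sf δ ∧ δ * ∫ ω, (w ω) ^ 2 / (1 + sf δ * w ω) ∂μ = 1) →
      Tendsto (fun δ : ℝ => δ * Real.log (sf δ)) (𝓝[>] 0)
        (𝓝 (-1 / (2 * C))) := by
  obtain ⟨x₀, hx₀, hx₀_tail⟩ := exists_tail_le_of_tendsto htail
  have hw_int := integrable_of_tail_le hw_meas.aemeasurable hx₀ hx₀_tail hw_nonneg
  refine ⟨fun δ hδ => existsUnique_pos_mul_meanFieldIntegral_eq_one hw_int hw_nonneg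
    (measure_pos_ne_zero_of_tendsto htail hC.ne')
    (tendsto_meanFieldIntegral_inv_atTop htail hC hw_meas.aemeasurable hw_nonneg) hδ,
    fun sf hsf => ?_⟩
  have := ((tendsto_meanFieldIntegral_inv_div_log htail hw_meas.aemeasurable hw_nonneg).comp
    (tendsto_inv_nhdsGT_zero.comp
      (tendsto_nhdsGT_zero_of_mul_meanFieldIntegral_eq_one hw_int hw_nonneg hsf))).inv₀
    (by positivity)
  rw [show -1 / (2 * C) = -(2 * C)⁻¹ by ring]
  refine this.neg.congr' ?_
  filter_upwards [self_mem_nhdsWithin] with δ (hδ : 0 < δ)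
  have hF : meanFieldIntegral μ w (sf δ) = δ⁻¹ :=
    ((mul_eq_one_iff_inv_eq₀ hδ.ne').1 (hsf δ hδ).2).symm
  simp only [Function.comp_apply, inv_inv, hF, log_inv]
  field_simp
end

section
/- Let n ≥ 1, let w₁, …, wₙ be positive real numbers, and let λ > 0, σ > 0 satisfy (λ/n)·Σ_{j=1}^n w_j²/(1+σw_j) = 1. Set ρᵢ = 1/(1+σwᵢ) and let Ā be the n×n matrix with entries Ā_{ij} = (λ wᵢ w_j/n)ρ_j for i ≠ j and Ā_{ii} = −1/ρᵢ + (λ wᵢ²/n)ρᵢ. Then (λ/n)·Σ_{i=1}^n wᵢ² ρᵢ² < 1, and every eigenvalue of Ā is real and at most (λ/n)·Σ_{i=1}^n wᵢ² ρᵢ² − 1 < 0. -/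
/-!
With `c = λ/n`, `D = diag ρ` and `v = D w`, the matrix is `Ā = D⁻¹ (c v vᵀ - I)`, where
`0 < ρᵢ < 1`. If `Ā x = μ x` with `x ≠ 0`, pairing `(c v vᵀ - I) x = μ D x` with `x̄` gives
`μ · Σ ρᵢ |xᵢ|² = c |v ⬝ x|² - |x|²`. The right side is real, so `μ` is real; Cauchy–Schwarz
bounds it by `(s - 1) |x|²` with `s = c |v|² = (λ/n) Σ wᵢ² ρᵢ²`, and `s < 1` because `ρᵢ < 1`
turns the normalisation `c Σ wᵢ² ρᵢ = 1` into a strict inequality. Since `s - 1 < 0` and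
`Σ ρᵢ |xᵢ|² ≤ |x|²`, this yields `μ ≤ s - 1`.
-/

open Matrix Complex

theorem Complex.normSq_sum_ofReal_mul_le {ι : Type*} [Fintype ι] (v : ι → ℝ) (x : ι → ℂ) :
    normSq (∑ i, (v i : ℂ) * x i) ≤ (∑ i, v i ^ 2) * ∑ i, normSq (x i) := by
  have htriangle : ‖∑ i, (v i : ℂ) * x i‖ ≤ ∑ i, |v i| * ‖x i‖ :=
    (norm_sum_le _ _).trans_eq (by simp)
  calc normSq (∑ i, (v i : ℂ) * x i) = ‖∑ i, (v i : ℂ) * x i‖ ^ 2 := normSq_eq_norm_sq _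
    _ ≤ (∑ i, |v i| * ‖x i‖) ^ 2 := pow_le_pow_left₀ (norm_nonneg _) htriangle 2
    _ ≤ (∑ i, |v i| ^ 2) * ∑ i, ‖x i‖ ^ 2 := Finset.sum_mul_sq_le_sq_mul_sq _ _ _
    _ = (∑ i, v i ^ 2) * ∑ i, normSq (x i) := by simp [normSq_eq_norm_sq]

namespace Matrix

variable {ι : Type*} [Fintype ι] [DecidableEq ι]

theorem exists_mulVec_eq_smul_of_mem_spectrum {K : Type*} [Field K] {M : Matrix ι ι K} {μ : K}
    (hμ : μ ∈ spectrum K M) : ∃ x ≠ 0, M *ᵥ x = μ • x := by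
  rw [← spectrum_toLin', ← Module.End.hasEigenvalue_iff_mem_spectrum] at hμ
  obtain ⟨x, hx⟩ := hμ.exists_hasEigenvector
  exact ⟨x, hx.2, by simpa using hx.apply_eq_smul⟩

theorem star_dotProduct_map_smul_vecMulVec_sub_one_mulVec (c : ℝ) (v : ι → ℝ) (x : ι → ℂ) :
    star x ⬝ᵥ (c • vecMulVec v v - 1 : Matrix ι ι ℝ).map (algebraMap ℝ ℂ) *ᵥ x =
      ((c * normSq (∑ i, (v i : ℂ) * x i) - ∑ i, normSq (x i) : ℝ) : ℂ) := by
  push_cast [normSq_eq_conj_mul_self, map_sum, map_mul, conj_ofReal]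
  simp [mulVec, dotProduct, vecMulVec, one_apply, mul_sub, sub_mul, Finset.mul_sum,
    Finset.sum_mul, Finset.sum_sub_distrib, apply_ite ((↑) : ℝ → ℂ)]
  rw [Finset.sum_comm]
  exact Finset.sum_congr rfl fun _ _ => Finset.sum_congr rfl fun _ _ => by ring

theorem star_dotProduct_map_mulVec_eq_of_map_diagonal_inv_mul_mulVec_eq {d : ι → ℝ}
    (hd : ∀ i, d i ≠ 0) {B : Matrix ι ι ℝ} {x : ι → ℂ} {μ : ℂ}
    (h : (diagonal d⁻¹ * B).map (algebraMap ℝ ℂ) *ᵥ x = μ • x) :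
    star x ⬝ᵥ B.map (algebraMap ℝ ℂ) *ᵥ x = μ * ∑ i, (d i * normSq (x i) : ℝ) := by
  have hB : diagonal d * (diagonal d⁻¹ * B) = B := by
    rw [← Matrix.mul_assoc, diagonal_mul_diagonal]
    simp [mul_inv_cancel₀ (hd _)]
  rw [← hB, Matrix.map_mul, ← mulVec_mulVec, h]
  push_cast [normSq_eq_conj_mul_self]
  simp [dotProduct, mulVec_diagonal, Finset.mul_sum]
  exact Finset.sum_congr rfl fun _ _ => by ring

theorem im_eq_zero_and_re_le_of_mem_spectrum_diagonal_inv_mul_smul_vecMulVec_sub_one {c : ℝ}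
    (hc : 0 ≤ c) {v d : ι → ℝ} (hd : ∀ i, 0 < d i ∧ d i ≤ 1) (hcv : c * ∑ i, v i ^ 2 ≤ 1) {μ : ℂ}
    (hμ : μ ∈ spectrum ℂ ((diagonal d⁻¹ * (c • vecMulVec v v - 1)).map (algebraMap ℝ ℂ))) :
    μ.im = 0 ∧ μ.re ≤ c * ∑ i, v i ^ 2 - 1 := by
  obtain ⟨x, hx0, hx⟩ := exists_mulVec_eq_smul_of_mem_spectrum hμ
  set P := ∑ i, d i * normSq (x i)
  set Q := ∑ i, normSq (x i)
  set S := ∑ i, (v i : ℂ) * x i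
  have hkey : μ * P = ((c * normSq S - Q : ℝ) : ℂ) := by
    rw [← star_dotProduct_map_smul_vecMulVec_sub_one_mulVec,
      star_dotProduct_map_mulVec_eq_of_map_diagonal_inv_mul_mulVec_eq (fun i => (hd i).1.ne') hx]
  have hP : 0 < P := by
    obtain ⟨i, hi⟩ := Function.ne_iff.mp hx0
    exact Finset.sum_pos' (fun j _ => mul_nonneg (hd j).1.le (normSq_nonneg _))
      ⟨i, Finset.mem_univ i, mul_pos (hd i).1 (normSq_pos.mpr hi)⟩
  have hPQ : P ≤ Q := Finset.sum_le_sum fun i _ =>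
    mul_le_of_le_one_left (normSq_nonneg _) (hd i).2
  have him : μ.im * P = 0 := by simpa using congrArg Complex.im hkey
  have hre : μ.re * P = c * normSq S - Q := by simpa using congrArg Complex.re hkey
  have him0 : μ.im = 0 := (mul_eq_zero.mp him).resolve_right hP.ne'
  refine ⟨him0, le_of_mul_le_mul_right ?_ hP⟩
  calc μ.re * P = c * normSq S - Q := hre
    _ ≤ c * ((∑ i, v i ^ 2) * Q) - Q :=
        by gcongr; exact Complex.normSq_sum_ofReal_mul_le v x
    _ = (c * ∑ i, v i ^ 2 - 1) * Q := by ring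
    _ ≤ (c * ∑ i, v i ^ 2 - 1) * P := mul_le_mul_of_nonpos_left hPQ (by linarith)

end Matrix

/-- Let `n ≥ 1`, `w₁,…,wₙ > 0`, `λ > 0`, `σ > 0` with
`(λ/n)·Σⱼ wⱼ²/(1+σwⱼ) = 1`. With `ρᵢ = 1/(1+σwᵢ)` and `Ā` the matrix with
`Ā_{ij} = (λwᵢwⱼ/n)ρⱼ` for `i ≠ j` and `Ā_{ii} = −1/ρᵢ + (λwᵢ²/n)ρᵢ`, one has
`(λ/n)·Σᵢ wᵢ²ρᵢ² < 1`, and every eigenvalue of `Ā` is real and at most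
`(λ/n)·Σᵢ wᵢ²ρᵢ² − 1 < 0`. -/
theorem conditioned_mean_matrix_eigenvalues
    (n : ℕ) (hn : 1 ≤ n) (lam σ : ℝ) (hlam : 0 < lam) (hσ : 0 < σ)
    (w : Fin n → ℝ) (hw : ∀ i, 0 < w i)
    (hσeq : lam / n * ∑ j, (w j) ^ 2 / (1 + σ * w j) = 1)
    (ρ : Fin n → ℝ) (hρ : ∀ i, ρ i = 1 / (1 + σ * w i))
    (A : Matrix (Fin n) (Fin n) ℝ)
    (hA : ∀ i j, A i j =
      if i = j then -1 / ρ i + lam * (w i) ^ 2 / n * ρ i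
      else lam * w i * w j / n * ρ j) :
    lam / n * ∑ i, (w i) ^ 2 * (ρ i) ^ 2 < 1 ∧
    ∀ μ : ℂ, μ ∈ spectrum ℂ (A.map (algebraMap ℝ ℂ)) →
      μ.im = 0 ∧ μ.re ≤ lam / n * ∑ i, (w i) ^ 2 * (ρ i) ^ 2 - 1 := by
  have hρ_mem : ∀ i, 0 < ρ i ∧ ρ i < 1 := fun i => by
    have hσw := mul_pos hσ (hw i)
    rw [hρ i]
    exact ⟨by positivity, (div_lt_one (by linarith)).mpr (by linarith)⟩
  have hc : 0 < lam / n := div_pos hlam (by exact_mod_cast hn)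
  have hterm : ∀ i, w i ^ 2 * ρ i ^ 2 < w i ^ 2 / (1 + σ * w i) := fun i => by
    rw [div_eq_mul_one_div, ← hρ i, sq (ρ i), ← mul_assoc]
    exact mul_lt_of_lt_one_right (mul_pos (pow_pos (hw i) 2) (hρ_mem i).1) (hρ_mem i).2
  have hlt : lam / n * ∑ i, w i ^ 2 * ρ i ^ 2 < 1 := hσeq ▸ mul_lt_mul_of_pos_left
    (Finset.sum_lt_sum_of_nonempty (Finset.univ_nonempty_iff.mpr ⟨⟨0, hn⟩⟩) fun i _ => hterm i) hc
  have hA_eq : A = diagonal ρ⁻¹ * ((lam / n) • vecMulVec (w * ρ) (w * ρ) - 1) := by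
    ext i j
    simp only [hA, diagonal_mul, Matrix.sub_apply, Matrix.smul_apply, vecMulVec_apply, one_apply,
      Pi.mul_apply, Pi.inv_apply, smul_eq_mul]
    have hρi := (hρ_mem i).1.ne'
    split_ifs with hij
    · subst hij; field_simp; ring
    · field_simp; ring
  have hsq : ∑ i, w i ^ 2 * ρ i ^ 2 = ∑ i, (w * ρ) i ^ 2 := by simp [mul_pow]
  refine ⟨hlt, fun μ hμ => ?_⟩
  rw [hA_eq] at hμ
  rw [hsq] at hlt ⊢
  exact im_eq_zero_and_re_le_of_mem_spectrum_diagonal_inv_mul_smul_vecMulVec_sub_one hc.le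
    (fun i => ⟨(hρ_mem i).1, (hρ_mem i).2.le⟩) hlt.le hμ
end
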